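/- In the reverse insertion algorithm Ψ applied to (P, (r,c), α), for each row index 1 ≤ i ≤ r, the status flag satisfies: α_i = 0 if and only if the bumping-path value m_i is ejectable in P'_{≥ i} (the working tableau restricted to rows i and below after processing row i). -/

import Mathlib

/-- Elementary 0-Hecke relations on words. -/
inductive HeckeRel : List ℕ → List ℕ → Prop
  | idem (i : ℕ) : HeckeRel [i, i] [i]
  | braid (i : ℕ) : HeckeRel [i, i+1, i] [i+1, i, i+1]
  | comm (i j : ℕ) (h : i + 2 ≤ j ∨ j + 2 ≤ i) : HeckeRel [i, j] [j, i]

/-- Hecke equivalence: the congruence on words generated by the 0-Hecke relations. -/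
inductive HeckeEquiv : List ℕ → List ℕ → Prop
  | of {a b : List ℕ} : HeckeRel a b → HeckeEquiv a b
  | refl (a : List ℕ) : HeckeEquiv a a
  | symm {a b : List ℕ} : HeckeEquiv a b → HeckeEquiv b a
  | trans {a b c : List ℕ} : HeckeEquiv a b → HeckeEquiv b c → HeckeEquiv a c
  | append_congr {a b c d : List ℕ} :
      HeckeEquiv a b → HeckeEquiv c d → HeckeEquiv (a ++ c) (b ++ d)

/-- The permutation of `ℕ` associated to a word (letter `i` ↦ the simple
transposition swapping `i` and `i+1`). -/
def wordPerm (a : List ℕ) : Equiv.Perm ℕ := (a.map fun i => Equiv.swap i (i + 1)).prod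

/-- A word on the alphabet of positive integers. -/
def IsPosWord (a : List ℕ) : Prop := ∀ x ∈ a, 0 < x

/-- `a` is a reduced word of the permutation `w`: it represents `w` and has
minimum length among words representing `w`. -/
def IsReducedWordOf (w : Equiv.Perm ℕ) (a : List ℕ) : Prop :=
  IsPosWord a ∧ wordPerm a = w ∧
    ∀ b : List ℕ, IsPosWord b → wordPerm b = w → a.length ≤ b.length

/-- `a` is a Hecke word for `w`: it is Hecke-equivalent to a reduced word of `w`. -/
def IsHeckeWord (w : Equiv.Perm ℕ) (a : List ℕ) : Prop :=
  IsPosWord a ∧ ∃ b, IsReducedWordOf w b ∧ HeckeEquiv a b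

/-- A word is reduced if it has minimum length in its Hecke-equivalence class. -/
def IsReducedWord (a : List ℕ) : Prop := ∀ b, HeckeEquiv a b → a.length ≤ b.length

/-- The `i`-th row (1-indexed) of a tableau presented as a list of rows. -/
def RowOf (T : List (List ℕ)) (i : ℕ) : List ℕ := T.getD (i - 1) []

/-- A decreasing tableau: nonempty rows of positive integers of weakly decreasing
lengths, strictly decreasing along rows and down columns. -/
def IsDecreasingTableau (T : List (List ℕ)) : Prop :=
  (∀ R ∈ T, R ≠ []) ∧
  (∀ R ∈ T, ∀ x ∈ R, 0 < x) ∧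
  (∀ R ∈ T, R.Chain' (fun x y => y < x)) ∧
  T.Chain' (fun R S => S.length ≤ R.length ∧ ∀ j < S.length, S.getD j 0 < R.getD j 0)

/-- The shape of a tableau: the list of its row lengths. -/
def shape (T : List (List ℕ)) : List ℕ := T.map List.length

/-- `(r,c)` (1-indexed, matrix style) is a removable cell of `T`: the cell at the
end of row `r` and at the bottom of column `c`. -/
def IsRemovable (T : List (List ℕ)) (r c : ℕ) : Prop :=
  1 ≤ r ∧ r ≤ T.length ∧ 1 ≤ c ∧ (RowOf T r).length = c ∧ (RowOf T (r + 1)).length < c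

/-- Ejectability (recursive): `x` is ejectable in `T` if `x` is in the first row of
`T` and either `x-1` is not in the first row, or it is and `x-1` is ejectable in
the tableau with the first row removed. -/
def Ejectable : List (List ℕ) → ℕ → Prop
  | [], _ => False
  | R :: rest, x => x ∈ R ∧ (x - 1 ∉ R ∨ Ejectable rest (x - 1))

/-- Boolean version of ejectability, used inside the algorithms. -/
def ejectableB : List (List ℕ) → ℕ → Bool
  | [], _ => false
  | R :: rest, x => R.contains x && (!(R.contains (x - 1)) || ejectableB rest (x - 1))

/-- Smallest ejectable value `x` in `T` with `lo < x < hi`, if any. -/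
def smallestEjectableBetween (T : List (List ℕ)) (lo hi : ℕ) : Option ℕ :=
  ((T.headD []).filter fun x => ejectableB T x && decide (lo < x) && decide (x < hi)).min?

/-- Largest ejectable value `x` in `T` with `lo < x < hi`, if any. -/
def largestEjectableBetween (T : List (List ℕ)) (lo hi : ℕ) : Option ℕ :=
  ((T.headD []).filter fun x => ejectableB T x && decide (lo < x) && decide (x < hi)).max?

/-- Replace all occurrences of `old` by `new` in a row. -/
def replaceVal (R : List ℕ) (old new : ℕ) : List ℕ :=
  R.map fun y => if y = old then new else y

/-- One step of the reverse insertion Ψ at a row `R`, given the already-processed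
lower tableau `B = P'_{>i}`, the value `m1 = m_{i+1}` and flag `a1 = α_{i+1}`.
Returns the new row, the value `m_i` and the flag `α_i`. -/
def psiRowStep (R : List ℕ) (B : List (List ℕ)) (m1 : ℕ) (a1 : Bool) :
    List ℕ × ℕ × Bool :=
  let mi := ((R.filter fun y => decide (m1 < y)).min?).getD 0
  if R.contains (mi - 1) then (R, mi, a1)                        -- Dummy
  else if a1 && !(R.contains m1) then (replaceVal R mi m1, mi, true)  -- Direct Repl.
  else
    match smallestEjectableBetween B m1 mi with
    | some x => (replaceVal R mi x, mi, true)                    -- Indirect Repl.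
    | none => (R, mi, false)                                     -- No Replacement

/-- Process a list of rows (top part of the tableau) from bottom to top, on top of
the already-processed lower tableau `B`, with initial ejected value `m` and flag `a`.
Returns the full processed tableau together with the last ejected value and flag. -/
def psiRows : List (List ℕ) → List (List ℕ) → ℕ → Bool → List (List ℕ) × ℕ × Bool
  | [], B, m, a => (B, m, a)
  | R :: rest, B, m, a =>
    let s := psiRows rest B m a
    let t := psiRowStep R s.1 s.2.1 s.2.2
    (t.1 :: s.1, t.2.1, t.2.2)

/-- The part of the tableau below the processed rows, after the initialization step
of Ψ (for `α = 1` the removable cell at the end of row `r` is deleted). -/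
def psiBase (P : List (List ℕ)) (r : ℕ) (α : Bool) : List (List ℕ) :=
  if α then
    (if (RowOf P r).dropLast = [] then P.drop r else (RowOf P r).dropLast :: P.drop r)
  else P.drop r

/-- The rows of `P` to be processed by Ψ. -/
def psiUpper (P : List (List ℕ)) (r : ℕ) (α : Bool) : List (List ℕ) :=
  if α then P.take (r - 1) else P.take r

/-- The initial value `m_{r+1}` (for `α = 0`) or `m_r` (for `α = 1`) fed to Ψ. -/
def psiM (P : List (List ℕ)) (r : ℕ) (α : Bool) : ℕ :=
  if α then ((RowOf P r).getLast?).getD 0 else 0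

/-- The state of the reverse insertion Ψ on `(P, (r,·), α)` after processing row `i`:
the working tableau restricted to rows `≥ i` (i.e. `P'_{≥ i}`), the value `m_i`
ejected from row `i`, and the flag `α_i`. -/
def psiStage (P : List (List ℕ)) (r : ℕ) (α : Bool) (i : ℕ) :
    List (List ℕ) × ℕ × Bool :=
  psiRows ((psiUpper P r α).drop (i - 1)) (psiBase P r α) (psiM P r α) α

/-- The reverse insertion Ψ: input a decreasing tableau `P`, the row index `r` of a
removable cell, and `α ∈ {0,1}`; output the new tableau `P'` and the value `m`. -/
def psi (P : List (List ℕ)) (r : ℕ) (α : Bool) : List (List ℕ) × ℕ :=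
  ((psiStage P r α 1).1, (psiStage P r α 1).2.1)

/-- The forward insertion of a value `N` into a tableau (list of rows, processed
top-down). Returns the new tableau, the row and column (1-indexed) of the
terminating cell, and the flag `α`. -/
def phiRows : ℕ → List (List ℕ) → List (List ℕ) × ℕ × ℕ × Bool
  | N, [] => ([[N]], 1, 1, true)                                   -- T1 (new row)
  | N, R :: rest =>
    match (R.filter fun y => decide (y ≤ N)).max? with
    | none => ((R ++ [N]) :: rest, 1, R.length + 1, true)          -- T1 (append)
    | some n1 =>
      let R' := replaceVal R n1 N
      let j := R.idxOf n1
      let n2 := R.getD (j + 1) 0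
      if n1 = N && R.contains (N - 1) then                         -- Dummy
        let o := phiRows (N - 1) rest
        (R' :: o.1, o.2.1 + 1, o.2.2.1, o.2.2.2)
      else if decide (n1 < N) && !(ejectableB rest n1) then        -- Direct Repl.
        let o := phiRows n1 rest
        (R' :: o.1, o.2.1 + 1, o.2.2.1, o.2.2.2)
      else
        match largestEjectableBetween rest n2 n1 with
        | some y =>                                                -- IR1
          let o := phiRows y rest
          (R' :: o.1, o.2.1 + 1, o.2.2.1, o.2.2.2)
        | none =>
          if n2 = 0 then (R' :: rest, 1, j + 1, false)             -- T2
          else                                                     -- IR2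
            let o := phiRows n2 rest
            (R' :: o.1, o.2.1 + 1, o.2.2.1, o.2.2.2)

/-- The forward insertion Φ of `m` into the decreasing tableau `P`. -/
def phi (P : List (List ℕ)) (m : ℕ) : List (List ℕ) × ℕ × ℕ × Bool := phiRows m P

/-- Edelman–Greene reverse row insertion: process rows bottom-to-top, always
replacing `m_i` by `m_{i+1}`. -/
def egRows : List (List ℕ) → List (List ℕ) → ℕ → List (List ℕ) × ℕ
  | [], B, m => (B, m)
  | R :: rest, B, m =>
    let s := egRows rest B m
    let mi := ((R.filter fun y => decide (s.2 < y)).min?).getD 0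
    (replaceVal R mi s.2 :: s.1, mi)

/-- EG reverse row insertion at the removable cell in row `r` of `P`. -/
def egRev (P : List (List ℕ)) (r : ℕ) : List (List ℕ) × ℕ :=
  egRows (P.take (r - 1)) (psiBase P r true) (psiM P r true)

/-- The row reading word: rows from bottom to top, each left to right. -/
def rowWord (T : List (List ℕ)) : List ℕ := T.reverse.flatten

/-- The shape obtained by removing the cell at the end of row `r` (1-indexed). -/
def shapeMinus (sh : List ℕ) (r : ℕ) : List ℕ :=
  (sh.set (r - 1) (sh.getD (r - 1) 0 - 1)).filter fun n => decide (n ≠ 0)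

/-- The shape obtained by adding one cell at the end of row `r` (1-indexed). -/
def shapePlus (sh : List ℕ) (r : ℕ) : List ℕ :=
  if r ≤ sh.length then sh.set (r - 1) (sh.getD (r - 1) 0 + 1) else sh ++ [1]

/-- The bumping path of the removable cell `(r,c)` of `T`: `m r` is the entry at
`(r,c)`, and for `1 ≤ i < r`, `m i` is the smallest entry of row `i` of `T`
exceeding `m (i+1)`. -/
def IsBumpingPath (T : List (List ℕ)) (r c : ℕ) (m : ℕ → ℕ) : Prop :=
  m r = (RowOf T r).getD (c - 1) 0 ∧
  ∀ i, 1 ≤ i → i < r →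
    m i ∈ RowOf T i ∧ m (i + 1) < m i ∧ ∀ y ∈ RowOf T i, m (i + 1) < y → m i ≤ y

/-- A compatible pair of words `(a, i)`: same length, positive letters, `i` weakly
decreasing, and equal consecutive `i`-letters force strictly increasing `a`-letters. -/
def CompatiblePair (a i : List ℕ) : Prop :=
  a.length = i.length ∧ IsPosWord a ∧ IsPosWord i ∧
    (i.zip a).Chain' fun p q => q.1 ≤ p.1 ∧ (p.1 = q.1 → p.2 < q.2)

/-- A set-valued tableau (of partition shape, presented as a list of rows of
finite sets): nonempty sets of positive integers, `max ≤ min` along rows,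
`max < min` down columns. -/
def IsSVT (Q : List (List (Finset ℕ))) : Prop :=
  (∀ R ∈ Q, R ≠ []) ∧
  Q.Chain' (fun R S => S.length ≤ R.length) ∧
  (∀ R ∈ Q, ∀ S ∈ R, S.Nonempty ∧ ∀ x ∈ S, 0 < x) ∧
  (∀ R ∈ Q, R.Chain' fun S S' => ∀ x ∈ S, ∀ y ∈ S', x ≤ y) ∧
  Q.Chain' fun R S => ∀ j < S.length, ∀ x ∈ R.getD j ∅, ∀ y ∈ S.getD j ∅, x < y

/-- Record the value `k` in the recording tableau `Q` at cell `(r,c)`: in a new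
cell if `newCell = true`, otherwise adding `k` to the set already there. -/
def recordCell (Q : List (List (Finset ℕ))) (r c k : ℕ) (newCell : Bool) :
    List (List (Finset ℕ)) :=
  if newCell then
    (if r ≤ Q.length then Q.set (r - 1) (Q.getD (r - 1) [] ++ [{k}]) else Q ++ [[{k}]])
  else
    Q.set (r - 1)
      ((Q.getD (r - 1) []).set (c - 1) (insert k ((Q.getD (r - 1) []).getD (c - 1) ∅)))

/-- The insertion correspondence: insert the letters of `a` successively by Φ,
recording the insertion of `a_k` with the value `i_k`. -/
def tildePhi (a i : List ℕ) : List (List ℕ) × List (List (Finset ℕ)) :=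
  ((a.zip i).reverse).foldl
    (fun PQ x =>
      let o := phi PQ.1 x.1
      (o.1, recordCell PQ.2 o.2.1 o.2.2.1 x.2 o.2.2.2))
    ([], [])

/-- The weight (multiset of entries) of a set-valued tableau. -/
def svtWeight (Q : List (List (Finset ℕ))) : Multiset ℕ :=
  (Q.flatten.map Finset.val).sum

/-!
The theorem is proved by induction on the rows processed by Ψ, from row `r` upwards. In the
Dummy case minimality of `m_i` gives `m_i - 1 = m_{i+1}` in row `i`, so `m_i` is ejectable in
`P'_{≥ i}` exactly when `m_{i+1}` is ejectable in `P'_{> i}`, and the flag is passed on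
unchanged. In both replacement cases `m_i` leaves row `i`, so it is not ejectable, and `α_i = 1`.
With no replacement `m_i` stays in row `i` while `m_i - 1` is absent, so `m_i` is ejectable, and
`α_i = 0`. The induction starts from `α_r = 1` for `α = 1`, where `m_r` is the removed last
entry of row `r`, which cannot reappear in the first row of what is left.
-/

-- `m = 0` is the fictitious `m_{r+1}` of the case `α = 0`, about which the flag says nothing.
def FlagCorrect (s : List (List ℕ) × ℕ × Bool) : Prop :=
  s.2.1 ≠ 0 → (s.2.2 = false ↔ Ejectable s.1 s.2.1)

def Dominates (R S : List ℕ) : Prop := ∀ y ∈ S, ∃ x ∈ R, y < x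

def minAbove (R : List ℕ) (m : ℕ) : ℕ := ((R.filter fun y => decide (m < y)).min?).getD 0

lemma mem_headD_of_ejectable {T : List (List ℕ)} {x : ℕ} (h : Ejectable T x) :
    x ∈ T.headD [] := by
  cases T with
  | nil => exact h.elim
  | cons R T => exact h.1

lemma notMem_replaceVal {R : List ℕ} {old new : ℕ} (h : new ≠ old) :
    old ∉ replaceVal R old new := by
  simp only [replaceVal, List.mem_map, not_exists, not_and]
  intro y _
  split_ifs with hy
  · exact h
  · exact hy

lemma smallestEjectableBetween_lt {T : List (List ℕ)} {lo hi x : ℕ}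
    (h : smallestEjectableBetween T lo hi = some x) : x < hi := by
  rw [smallestEjectableBetween, List.min?_eq_some_iff] at h
  have := h.1
  simp only [List.mem_filter, Bool.and_eq_true, decide_eq_true_eq] at this
  exact this.2.2

lemma minAbove_spec {R : List ℕ} {m : ℕ} (h : ∃ y ∈ R, m < y) :
    minAbove R m ∈ R ∧ m < minAbove R m ∧ ∀ y ∈ R, m < y → minAbove R m ≤ y := by
  obtain ⟨y, hyR, hmy⟩ := h
  obtain ⟨mi, hmi⟩ : ∃ mi, (R.filter fun y => decide (m < y)).min? = some mi :=
    Option.ne_none_iff_exists'.mp (by simpa using ⟨y, hyR, hmy⟩)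
  rw [minAbove, hmi, Option.getD_some]
  rw [List.min?_eq_some_iff] at hmi
  simp only [List.mem_filter, decide_eq_true_eq, and_imp] at hmi
  exact ⟨hmi.1.1, hmi.1.2, hmi.2⟩

lemma psiRowStep_snd (R : List ℕ) (B : List (List ℕ)) (m1 : ℕ) (a1 : Bool) :
    (psiRowStep R B m1 a1).2.1 = minAbove R m1 := by
  unfold psiRowStep
  dsimp only
  split_ifs <;> try rfl
  split <;> rfl

lemma flagCorrect_psiRowStep {R : List ℕ} {B : List (List ℕ)} {m1 : ℕ} {a1 : Bool}
    (hpos : ∀ x ∈ R, 0 < x) (hex : ∃ y ∈ R, m1 < y) (hinv : FlagCorrect (B, m1, a1)) :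
    FlagCorrect ((psiRowStep R B m1 a1).1 :: B, (psiRowStep R B m1 a1).2) := by
  obtain ⟨hmiR, hlt, hmin⟩ := minAbove_spec hex
  intro _
  dsimp only
  rw [psiRowStep_snd]
  unfold psiRowStep
  dsimp only
  rw [show ((R.filter fun y => decide (m1 < y)).min?).getD 0 = minAbove R m1 from rfl]
  split_ifs with hdummy hdirect
  · rw [List.contains_iff_mem] at hdummy
    have hm1 : minAbove R m1 - 1 = m1 := by
      have := mt (hmin _ hdummy)
      omega
    rw [hm1] at hdummy
    simp only [Ejectable, hmiR, hm1, hdummy, not_true_eq_false, false_or, true_and]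
    exact hinv (hpos _ hdummy).ne'
  · exact iff_of_false (by simp) fun h => notMem_replaceVal hlt.ne h.1
  · split
    · next x hx =>
      exact iff_of_false (by simp)
        fun h => notMem_replaceVal (smallestEjectableBetween_lt hx).ne h.1
    · simp only [List.contains_iff_mem] at hdummy
      exact iff_of_true rfl ⟨hmiR, Or.inl hdummy⟩

lemma flagCorrect_psiRows {B : List (List ℕ)} {m : ℕ} {a : Bool}
    (hinv : FlagCorrect (B, m, a)) :
    ∀ {L : List (List ℕ)}, (∀ R ∈ L, ∀ x ∈ R, 0 < x) → L.IsChain Dominates →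
      (∀ R ∈ L.getLast?, ∃ x ∈ R, m < x) →
      FlagCorrect (psiRows L B m a) ∧ ∀ R ∈ L.head?, (psiRows L B m a).2.1 ∈ R
  | [], _, _, _ => ⟨hinv, by simp⟩
  | R :: L, hpos, hch, hm => by
    rw [List.isChain_cons] at hch
    obtain ⟨ih, ih_mem⟩ := flagCorrect_psiRows hinv
      (fun S hS => hpos S (List.mem_cons_of_mem _ hS)) hch.2
      (fun S hS => hm S (List.mem_getLast?_cons hS))
    have hex : ∃ y ∈ R, (psiRows L B m a).2.1 < y := by
      cases L with
      | nil => exact hm R rfl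
      | cons S L => exact hch.1 S rfl _ (ih_mem S rfl)
    refine ⟨flagCorrect_psiRowStep (hpos R (by simp)) hex ih, ?_⟩
    simpa [psiRows, psiRowStep_snd] using (minAbove_spec hex).1

lemma rowOf_mem {P : List (List ℕ)} {r : ℕ} (h1 : 1 ≤ r) (hr : r ≤ P.length) :
    RowOf P r ∈ P := by
  rw [RowOf, List.getD_eq_getElem _ _ (by omega)]
  exact List.getElem_mem _

lemma psiUpper_sublist (P : List (List ℕ)) (r : ℕ) (α : Bool) : (psiUpper P r α).Sublist P := by
  cases α <;> exact List.take_sublist _ _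

namespace IsDecreasingTableau

variable {P : List (List ℕ)}

lemma ne_nil (hP : IsDecreasingTableau P) {R : List ℕ} (hR : R ∈ P) : R ≠ [] := hP.1 R hR

lemma pos (hP : IsDecreasingTableau P) {R : List ℕ} (hR : R ∈ P) {x : ℕ} (hx : x ∈ R) :
    0 < x :=
  hP.2.1 R hR x hx

lemma isChain_dominates (hP : IsDecreasingTableau P) : P.IsChain Dominates :=
  hP.2.2.2.imp fun R S ⟨hlen, hlt⟩ y hy => by
    obtain ⟨j, hj, rfl⟩ := List.getElem_of_mem hy
    refine ⟨R[j], List.getElem_mem _, ?_⟩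
    simpa [List.getD_eq_getElem?_getD, hj, Nat.lt_of_lt_of_le hj hlen] using hlt j hj

lemma psiM_true_eq_getLast {r : ℕ} (hP : IsDecreasingTableau P) (h1 : 1 ≤ r)
    (hr : r ≤ P.length) :
    ∃ hne : RowOf P r ≠ [], psiM P r true = (RowOf P r).getLast hne := by
  have hne := hP.ne_nil (rowOf_mem h1 hr)
  exact ⟨hne, by simp [psiM, List.getLast?_eq_some_getLast hne]⟩

lemma psiM_true_mem_rowOf {r : ℕ} (hP : IsDecreasingTableau P) (h1 : 1 ≤ r)
    (hr : r ≤ P.length) : psiM P r true ∈ RowOf P r := by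
  obtain ⟨hne, hM⟩ := psiM_true_eq_getLast hP h1 hr
  exact hM ▸ List.getLast_mem hne

lemma not_ejectable_psiBase {r c : ℕ} (hP : IsDecreasingTableau P)
    (hrc : IsRemovable P r c) : ¬ Ejectable (psiBase P r true) (psiM P r true) := by
  obtain ⟨h1, hr, -, hlen, hbelow⟩ := hrc
  obtain ⟨hne, hM⟩ := psiM_true_eq_getLast hP h1 hr
  intro h
  have hmem := mem_headD_of_ejectable h
  simp only [psiBase, if_true, hM] at hmem
  split_ifs at hmem with hdrop
  · -- the cell `(r, 1)` is removable, so there is no row `r + 1`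
    have hnil : RowOf P (r + 1) = [] := by
      have := congrArg List.length hdrop
      simp only [List.length_dropLast, List.length_nil] at this
      exact List.eq_nil_of_length_eq_zero (by omega)
    simp_all [RowOf, List.getD_eq_getElem?_getD]
  · have hnodup : (RowOf P r).Nodup :=
      (List.isChain_iff_pairwise.mp (hP.2.2.1 _ (rowOf_mem h1 hr))).imp fun h => h.ne'
    rw [← List.dropLast_append_getLast hne, List.nodup_append] at hnodup
    exact hnodup.2.2 _ hmem _ (List.mem_singleton_self _) rfl

lemma isChain_psiUpper (hP : IsDecreasingTableau P) (r : ℕ) (α : Bool) :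
    (psiUpper P r α).IsChain Dominates := by
  cases α <;> exact hP.isChain_dominates.take _

lemma psiM_lt_of_mem_getLast? {r c : ℕ} (hP : IsDecreasingTableau P)
    (hrc : IsRemovable P r c) (α : Bool) (k : ℕ) :
    ∀ R ∈ ((psiUpper P r α).drop k).getLast?, ∃ x ∈ R, psiM P r α < x := by
  obtain ⟨h1, hr, -⟩ := hrc
  intro R hR
  rw [List.getLast?_drop] at hR
  split_ifs at hR
  · simp at hR
  cases α
  · have hRP := (psiUpper_sublist P r false).subset (List.mem_of_mem_getLast? hR)
    obtain ⟨x, hx⟩ := List.exists_mem_of_ne_nil R (hP.ne_nil hRP)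
    exact ⟨x, hx, hP.pos hRP hx⟩
  · have hsplit : P.take r = P.take (r - 1) ++ [RowOf P r] := by
      obtain ⟨n, rfl⟩ := Nat.exists_eq_add_of_le' h1
      rw [List.take_add_one, List.getElem?_eq_getElem (by omega), RowOf, Nat.add_sub_cancel,
        List.getD_eq_getElem _ _ (by omega)]
      rfl
    have hch := hP.isChain_dominates.take r
    rw [hsplit, List.isChain_append] at hch
    exact hch.2.2 R hR _ rfl _ (hP.psiM_true_mem_rowOf h1 hr)

lemma flagCorrect_psiBase {r c : ℕ} (hP : IsDecreasingTableau P) (hrc : IsRemovable P r c)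
    (α : Bool) : FlagCorrect (psiBase P r α, psiM P r α, α) := by
  cases α
  · exact fun h => (h rfl).elim
  · exact fun _ => iff_of_false (by simp) (hP.not_ejectable_psiBase hrc)

end IsDecreasingTableau

/-- in Ψ, for each `1 ≤ i ≤ r`, the flag `α_i` is `0` iff `m_i` is
ejectable in `P'_{≥ i}` (the working tableau restricted to rows `≥ i` after
processing row `i`). -/
theorem statement6 (P : List (List ℕ)) (r c : ℕ) (α : Bool)
    (hP : IsDecreasingTableau P) (hrc : IsRemovable P r c) :
    ∀ i, 1 ≤ i → i ≤ r →
      ((psiStage P r α i).2.2 = false ↔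
        Ejectable (psiStage P r α i).1 (psiStage P r α i).2.1) := by
  intro i _ hir
  have hsub : ((psiUpper P r α).drop (i - 1)).Sublist P :=
    (List.drop_sublist _ _).trans (psiUpper_sublist P r α)
  obtain ⟨hflag, hmem⟩ := flagCorrect_psiRows (hP.flagCorrect_psiBase hrc α)
    (fun R hR _ => hP.pos (hsub.subset hR)) ((hP.isChain_psiUpper r α).drop (i - 1))
    (hP.psiM_lt_of_mem_getLast? hrc α (i - 1))
  refine hflag ?_
  cases hL : (psiUpper P r α).drop (i - 1) with
  | nil =>
    simp only [psiRows]
    cases α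
    · simp only [psiUpper, Bool.false_eq_true, if_false, List.drop_eq_nil_iff,
        List.length_take] at hL
      have := hrc.2.1
      omega
    · exact (hP.pos (rowOf_mem hrc.1 hrc.2.1) (hP.psiM_true_mem_rowOf hrc.1 hrc.2.1)).ne'
  | cons R L =>
    rw [hL] at hmem hsub
    exact (hP.pos (hsub.subset (by simp)) (hmem R rfl)).ne'
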